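/- Let (X, 𝒜, μ) be a measure space with μ(X) = 1 (a probability space), let n ≥ 2 be a real number, and let f : X → ℝ be measurable with x ↦ exp(n·f(x)), x ↦ exp(2·f(x)) and x ↦ exp(f(x)) all μ-integrable. If ∫_X exp(n·f) dμ ≤ 1 and ∫_X exp(2f) dμ + ∫_X exp(f) dμ ≥ 2, then f = 0 μ-almost everywhere. -/

import Mathlib

open MeasureTheory Real

/-!
Convexity of `exp` gives `b (e^{at} - 1) ≤ a (e^{bt} - 1)` for `0 ≤ a ≤ b`; integrating, `∫ e^{nf} ≤ 1`
forces `∫ e^{2f} ≤ 1`. For `u = e^f` the two integral conditions then give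
`∫ (u - 1)² = ∫ u² - 2 ∫ u + 1 ≤ 3 (∫ u² - 1) ≤ 0`, so `u = 1` almost everywhere.
-/

lemma mul_exp_mul_sub_one_le_of_le {a b : ℝ} (ha : 0 ≤ a) (hab : a ≤ b) (t : ℝ) :
    b * (exp (a * t) - 1) ≤ a * (exp (b * t) - 1) := by
  rcases (ha.trans hab).eq_or_lt with rfl | hb
  · simp [le_antisymm hab ha]
  have hconv := convexOn_exp.2 (Set.mem_univ (b * t)) (Set.mem_univ 0)
    (div_nonneg ha hb.le) (sub_nonneg.2 ((div_le_one hb).2 hab)) (add_sub_cancel _ _)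
  have hat : (a / b) • (b * t) + (1 - a / b) • (0 : ℝ) = a * t := by
    simp only [smul_eq_mul, mul_zero, add_zero]; field_simp
  rw [hat, exp_zero, smul_eq_mul, smul_eq_mul, mul_one] at hconv
  calc b * (exp (a * t) - 1) ≤ b * (a / b * exp (b * t) + (1 - a / b) - 1) := by gcongr
    _ = a * (exp (b * t) - 1) := by field_simp; ring

section ProbabilityMeasure

variable {X : Type*} [MeasurableSpace X] {μ : Measure X} [IsProbabilityMeasure μ]

lemma integral_exp_mul_le_one_of_le {a b : ℝ} (ha : 0 < a) (hab : a ≤ b) {g : X → ℝ}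
    (hint_a : Integrable (fun x => exp (a * g x)) μ)
    (hint_b : Integrable (fun x => exp (b * g x)) μ)
    (hle : ∫ x, exp (b * g x) ∂μ ≤ 1) :
    ∫ x, exp (a * g x) ∂μ ≤ 1 := by
  have hmono : ∫ x, b * (exp (a * g x) - 1) ∂μ ≤ ∫ x, a * (exp (b * g x) - 1) ∂μ :=
    integral_mono ((hint_a.sub (integrable_const 1)).const_mul b)
      ((hint_b.sub (integrable_const 1)).const_mul a)
      fun x => mul_exp_mul_sub_one_le_of_le ha.le hab (g x)
  simp only [integral_const_mul, integral_sub hint_a (integrable_const 1),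
    integral_sub hint_b (integrable_const 1), integral_const, probReal_univ, one_smul] at hmono
  nlinarith

lemma ae_eq_one_of_integral_sq_le_one {u : X → ℝ} (hint_sq : Integrable (fun x => u x ^ 2) μ)
    (hint : Integrable u μ) (hle : ∫ x, u x ^ 2 ∂μ ≤ 1)
    (hge : 2 ≤ ∫ x, u x ^ 2 ∂μ + ∫ x, u x ∂μ) :
    u =ᵐ[μ] 1 := by
  have hint_lin : Integrable (fun x => u x ^ 2 - 2 * u x) μ := hint_sq.sub (hint.const_mul 2)
  have hexpand : (fun x => (u x - 1) ^ 2) = fun x => u x ^ 2 - 2 * u x + 1 := by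
    ext x; ring
  have hint_dev : Integrable (fun x => (u x - 1) ^ 2) μ := by
    rw [hexpand]; exact hint_lin.add (integrable_const 1)
  have hdev : ∫ x, (u x - 1) ^ 2 ∂μ = ∫ x, u x ^ 2 ∂μ - 2 * ∫ x, u x ∂μ + 1 := by
    rw [hexpand, integral_add hint_lin (integrable_const 1),
      integral_sub hint_sq (hint.const_mul 2), integral_const_mul, integral_const,
      probReal_univ, one_smul]
  have hzero : (fun x => (u x - 1) ^ 2) =ᵐ[μ] 0 :=
    (integral_eq_zero_iff_of_nonneg (fun x => sq_nonneg _) hint_dev).1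
      (le_antisymm (by linarith) (integral_nonneg fun x => sq_nonneg _))
  filter_upwards [hzero] with x hx
  simpa [sub_eq_zero] using hx

end ProbabilityMeasure

theorem conformal_factor_vanishes_general
    {X : Type*} [MeasurableSpace X] (μ : Measure X) [IsProbabilityMeasure μ]
    (n : ℝ) (hn : 2 ≤ n) (f : X → ℝ)
    (hint_n : Integrable (fun x => Real.exp (n * f x)) μ)
    (hint_2 : Integrable (fun x => Real.exp (2 * f x)) μ)
    (hint_1 : Integrable (fun x => Real.exp (f x)) μ)
    (hle : ∫ x, Real.exp (n * f x) ∂μ ≤ 1)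
    (hge : 2 ≤ (∫ x, Real.exp (2 * f x) ∂μ) + ∫ x, Real.exp (f x) ∂μ) :
    f =ᵐ[μ] 0 := by
  have hsq : ∀ x, exp (f x) ^ 2 = exp (2 * f x) := fun x => by rw [← exp_nat_mul]; norm_num
  have hle_2 : ∫ x, exp (2 * f x) ∂μ ≤ 1 :=
    integral_exp_mul_le_one_of_le two_pos hn hint_2 hint_n hle
  have hexp : (fun x => exp (f x)) =ᵐ[μ] 1 :=
    ae_eq_one_of_integral_sq_le_one (by simpa only [hsq] using hint_2) hint_1
      (by simpa only [hsq] using hle_2) (by simpa only [hsq] using hge)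
  filter_upwards [hexp] with x hx
  exact exp_eq_one_iff _ |>.1 hx

/-- Equality case: on a probability space, if `∫ exp(n f) dμ ≤ 1` for `n ≥ 2` and
`∫ exp(2f) dμ + ∫ exp(f) dμ ≥ 2`, then `f = 0` μ-a.e. -/
theorem conformal_factor_vanishes
    {X : Type*} [MeasurableSpace X] (μ : Measure X) [IsProbabilityMeasure μ]
    (n : ℝ) (hn : 2 ≤ n) (f : X → ℝ) (hf : Measurable f)
    (hint_n : Integrable (fun x => Real.exp (n * f x)) μ)
    (hint_2 : Integrable (fun x => Real.exp (2 * f x)) μ)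
    (hint_1 : Integrable (fun x => Real.exp (f x)) μ)
    (hle : ∫ x, Real.exp (n * f x) ∂μ ≤ 1)
    (hge : 2 ≤ (∫ x, Real.exp (2 * f x) ∂μ) + ∫ x, Real.exp (f x) ∂μ) :
    f =ᵐ[μ] 0 :=
  conformal_factor_vanishes_general μ n hn f hint_n hint_2 hint_1 hle hge
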